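/- A mechanism M is (ε, δ)-DP if and only if for all adjacent datasets D, D', every test distinguishing M(D) from M(D') satisfies TPR ≤ min{ e^ε·FPR + δ, 1 − e^{−ε}(1 − δ − FPR) }. -/

import Mathlib

/-!
The DP inequality for events transfers to `[0, 1]`-valued tests through the layer-cake formula
`∫ t dμ = ∫₀¹ μ {t ≥ s} ds`. Applied to the test `1 - t` with the two datasets swapped
(adjacency is symmetric), it gives `1 - FPR ≤ e^ε (1 - TPR) + δ`, which is the second bound after
multiplying by `e^{-ε}`. Conversely, indicator tests recover the inequality for events.
-/

open MeasureTheory Real Set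

section

variable {Ω : Type*} [MeasurableSpace Ω]

lemma integrable_of_nonneg_of_le_one {μ : Measure Ω} [IsFiniteMeasure μ] {t : Ω → ℝ}
    (ht : Measurable t) (h0 : ∀ ω, 0 ≤ t ω) (h1 : ∀ ω, t ω ≤ 1) : Integrable t μ :=
  .of_bound ht.aestronglyMeasurable 1 <| .of_forall fun ω => by
    rw [norm_of_nonneg (h0 ω)]; exact h1 ω

lemma integrableOn_Ioc_measureReal_le (μ : Measure Ω) [IsFiniteMeasure μ] (t : Ω → ℝ)
    {b : ℝ} (hb : 0 ≤ b) : IntegrableOn (fun s => μ.real {ω | s ≤ t ω}) (Ioc 0 b) := by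
  have hanti : Antitone fun s => μ.real {ω | s ≤ t ω} :=
    fun _ _ hst => measureReal_mono fun _ hω => hst.trans hω
  exact (intervalIntegrable_iff_integrableOn_Ioc_of_le hb).mp hanti.intervalIntegrable

lemma integral_le_mul_integral_add_of_measureReal_le {μ ν : Measure Ω}
    [IsFiniteMeasure μ] [IsFiniteMeasure ν] {a b : ℝ}
    (h : ∀ S, MeasurableSet S → μ.real S ≤ a * ν.real S + b)
    {t : Ω → ℝ} (ht : Measurable t) (h0 : ∀ ω, 0 ≤ t ω) (h1 : ∀ ω, t ω ≤ 1) :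
    ∫ ω, t ω ∂μ ≤ a * ∫ ω, t ω ∂ν + b := by
  have layercake (κ : Measure Ω) [IsFiniteMeasure κ] :
      ∫ ω, t ω ∂κ = ∫ s in Ioc 0 1, κ.real {ω | s ≤ t ω} :=
    (integrable_of_nonneg_of_le_one ht h0 h1).integral_eq_integral_Ioc_meas_le
      (.of_forall h0) (.of_forall h1)
  have hν := integrableOn_Ioc_measureReal_le ν t zero_le_one
  have hb : IntegrableOn (fun _ => b) (Ioc (0 : ℝ) 1) := integrableOn_const (by simp)
  rw [layercake μ, layercake ν]
  calc ∫ s in Ioc 0 1, μ.real {ω | s ≤ t ω}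
      ≤ ∫ s in Ioc 0 1, (a * ν.real {ω | s ≤ t ω} + b) :=
        setIntegral_mono_on (integrableOn_Ioc_measureReal_le μ t zero_le_one)
          ((hν.const_mul a).add hb) measurableSet_Ioc
          fun s _ => h _ (measurableSet_le measurable_const ht)
    _ = (a * ∫ s in Ioc 0 1, ν.real {ω | s ≤ t ω}) + b := by
        rw [integral_add (hν.const_mul a) hb, integral_const_mul, setIntegral_const]
        simp

lemma integral_one_sub {μ : Measure Ω} [IsProbabilityMeasure μ] {t : Ω → ℝ}
    (ht : Integrable t μ) : ∫ ω, (1 - t ω) ∂μ = 1 - ∫ ω, t ω ∂μ := by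
  rw [integral_sub (integrable_const 1) ht, integral_const, probReal_univ, one_smul]

end

lemma le_one_sub_exp_neg_mul_of_one_sub_le {p q ε δ : ℝ}
    (h : 1 - q ≤ exp ε * (1 - p) + δ) : p ≤ 1 - exp (-ε) * (1 - δ - q) := by
  have h' := mul_le_mul_of_nonneg_left h (exp_pos (-ε)).le
  rw [mul_add, ← mul_assoc, ← exp_add, neg_add_cancel, exp_zero, one_mul] at h'
  linarith

theorem dp_iff_tpr_bound_general
    {D Ω : Type*} [MeasurableSpace Ω]
    (M : D → Measure Ω) (hprob : ∀ d, IsProbabilityMeasure (M d))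
    (adj : D → D → Prop) (hsymm : ∀ a b, adj a b → adj b a)
    (ε δ : ℝ) :
    (∀ d d', adj d d' → ∀ S : Set Ω, MeasurableSet S →
        (M d S).toReal ≤ Real.exp ε * (M d' S).toReal + δ)
    ↔ (∀ d d', adj d d' →
        ∀ t : Ω → ℝ, Measurable t → (∀ ω, 0 ≤ t ω) → (∀ ω, t ω ≤ 1) →
          ∫ ω, t ω ∂(M d) ≤
            min (Real.exp ε * ∫ ω, t ω ∂(M d') + δ)
              (1 - Real.exp (-ε) * (1 - δ - ∫ ω, t ω ∂(M d')))) := by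
  constructor
  · intro hDP d d' hadj t ht h0 h1
    have := hprob d
    have := hprob d'
    have hcompl : ∫ ω, (1 - t ω) ∂(M d') ≤ exp ε * ∫ ω, (1 - t ω) ∂(M d) + δ :=
      integral_le_mul_integral_add_of_measureReal_le (hDP d' d (hsymm d d' hadj))
        (measurable_const.sub ht) (fun ω => sub_nonneg.mpr (h1 ω)) (fun ω => by linarith [h0 ω])
    rw [integral_one_sub (integrable_of_nonneg_of_le_one ht h0 h1),
      integral_one_sub (integrable_of_nonneg_of_le_one ht h0 h1)] at hcompl
    exact le_min (integral_le_mul_integral_add_of_measureReal_le (hDP d d' hadj) ht h0 h1)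
      (le_one_sub_exp_neg_mul_of_one_sub_le hcompl)
  · intro hT d d' hadj S hS
    have := hprob d
    have := hprob d'
    have hind := hT d d' hadj (S.indicator 1) (measurable_one.indicator hS)
      (indicator_nonneg fun _ _ => zero_le_one) (indicator_le_self' fun _ _ => zero_le_one)
    rw [integral_indicator_one hS, integral_indicator_one hS] at hind
    exact hind.trans (min_le_left _ _)

/-- Hypothesis-testing characterization of `(ε, δ)`-DP (Kairouz et al.):
`M` is `(ε, δ)`-DP iff for all adjacent datasets, every (possibly randomized) test
satisfies `TPR ≤ min (exp ε * FPR + δ) (1 - exp (-ε) * (1 - δ - FPR))`. -/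
theorem dp_iff_tpr_bound
    {D Ω : Type*} [MeasurableSpace Ω]
    (M : D → Measure Ω) (hprob : ∀ d, IsProbabilityMeasure (M d))
    (adj : D → D → Prop) (hsymm : ∀ a b, adj a b → adj b a)
    (ε δ : ℝ) (hε : 0 ≤ ε) (hδ : 0 ≤ δ) :
    (∀ d d', adj d d' → ∀ S : Set Ω, MeasurableSet S →
        (M d S).toReal ≤ Real.exp ε * (M d' S).toReal + δ)
    ↔ (∀ d d', adj d d' →
        ∀ t : Ω → ℝ, Measurable t → (∀ ω, 0 ≤ t ω) → (∀ ω, t ω ≤ 1) →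
          ∫ ω, t ω ∂(M d) ≤
            min (Real.exp ε * ∫ ω, t ω ∂(M d') + δ)
              (1 - Real.exp (-ε) * (1 - δ - ∫ ω, t ω ∂(M d')))) :=
  dp_iff_tpr_bound_general M hprob adj hsymm ε δ
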